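/- arXiv:2601.12825 — 2 statements merged into one kernel-verified Lean document; each statement's English description precedes it below -/
import Mathlib

section
/- Let n ≥ 1, a ∈ ℂ^n, r > 0, and C ≥ 0. Let φ : B(a, r) → ℝ be continuous and β holomorphic on B(a, r) with β(a) = 0, such that |φ(z) − φ(a) − 2 Re β(z)| ≤ C |z − a|² for all z ∈ B(a, r). Then for every holomorphic function v on B(a, r): ∫_{B(a,r)} |v(z)|² e^{−φ(z)} dλ(z) ≥ σ_{2n} · r^{2n} · |v(a)|² · e^{−φ(a) − C r²}. -/
/-!
With `u = v e^{-β}` the Taylor bound gives `|v|² e^{-φ} ≥ e^{-φ(a) - C r²} |u|²` on the ball, and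
`u(a) = v(a)`, so it suffices to show `λ(B(a,r)) |u(a)|² ≤ ∫_{B(a,r)} |u|²` for holomorphic `u`.
On each complex line through `a`, the mean value property and Jensen's inequality give
`|u(a)|² ≤` the circle average of `|u|²`. Averaging over the rotations `z ↦ a + e^{iθ}(z - a)`,
which preserve Haar measure and the ball, and applying Tonelli yields the ball inequality.
-/

open MeasureTheory
open scoped ENNReal

noncomputable instance (n : ℕ) : MeasurableSpace (EuclideanSpace ℂ (Fin n)) := borel _
instance (n : ℕ) : BorelSpace (EuclideanSpace ℂ (Fin n)) := ⟨rfl⟩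

open Metric Real Complex

theorem DiffContOnCl.norm_sq_le_circleAverage {f : ℂ → ℂ} {c : ℂ} {R : ℝ}
    (hf : DiffContOnCl ℂ f (ball c |R|)) :
    ‖f c‖ ^ 2 ≤ Real.circleAverage (fun z ↦ ‖f z‖ ^ 2) c R := by
  rcases eq_or_ne R 0 with rfl | hR
  · simp
  have hconv : ConvexOn ℝ Set.univ (fun z : ℂ ↦ ‖z‖ ^ 2) :=
    (convexOn_norm convex_univ).pow (fun _ _ ↦ norm_nonneg _) 2
  have hcont : Continuous fun θ ↦ f (circleMap c R θ) :=
    hf.continuousOn.comp_continuous (continuous_circleMap c R) fun θ ↦ by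
      rw [closure_ball c (abs_ne_zero.2 hR)]
      exact sphere_subset_closedBall (circleMap_mem_sphere' c R θ)
  rw [← hf.circleAverage, circleAverage_eq_intervalAverage, circleAverage_eq_intervalAverage]
  exact hconv.map_set_average_le (by fun_prop) isClosed_univ (by simp)
    (by simp [ENNReal.mul_eq_top]) (by simp) hcont.integrableOn_uIoc
    (hcont.norm.pow 2).integrableOn_uIoc

theorem ofReal_two_pi_mul_circleAverage {g : ℂ → ℝ} {c : ℂ} {R : ℝ}
    (hg : CircleIntegrable g c R) (hg₀ : 0 ≤ g) :
    ENNReal.ofReal (2 * π * circleAverage g c R) =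
      ∫⁻ θ in Set.Ioc 0 (2 * π), ENNReal.ofReal (g (circleMap c R θ)) := by
  rw [circleAverage_def, smul_eq_mul, mul_inv_cancel_left₀ two_pi_pos.ne',
    intervalIntegral.integral_of_le two_pi_pos.le]
  exact ofReal_integral_eq_lintegral_ofReal hg.1 (Filter.Eventually.of_forall fun θ ↦ hg₀ _)

section ComplexSpace

variable {E : Type*} [NormedAddCommGroup E] [NormedSpace ℂ E]

theorem ofReal_two_pi_mul_norm_sq_le_lintegral_circle {u : E → ℂ} {a z : E} {r : ℝ}
    (hu : DifferentiableOn ℂ u (ball a r)) (hz : z ∈ ball a r) :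
    ENNReal.ofReal (2 * π * ‖u a‖ ^ 2) ≤
      ∫⁻ θ in Set.Ioc 0 (2 * π), ENNReal.ofReal (‖u (a + circleMap 0 1 θ • (z - a))‖ ^ 2) := by
  set g : ℂ → ℂ := fun w ↦ u (a + w • (z - a))
  have hmaps : Set.MapsTo (fun w : ℂ ↦ a + w • (z - a)) (closedBall 0 1) (ball a r) := by
    intro w hw
    rw [mem_closedBall_zero_iff] at hw
    rw [mem_ball_iff_norm] at hz ⊢
    calc ‖a + w • (z - a) - a‖ = ‖w‖ * ‖z - a‖ := by rw [add_sub_cancel_left, norm_smul]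
      _ ≤ ‖z - a‖ := mul_le_of_le_one_left (norm_nonneg _) hw
      _ < r := hz
  have hg : DifferentiableOn ℂ g (closedBall 0 1) := hu.comp (by fun_prop) hmaps
  have hg' : DiffContOnCl ℂ g (ball 0 |1|) := by
    rw [abs_one]
    exact (closure_ball (0 : ℂ) one_ne_zero ▸ hg).diffContOnCl
  have hint : CircleIntegrable (fun w ↦ ‖g w‖ ^ 2) 0 1 :=
    ((hg.continuousOn.norm.pow 2).mono sphere_subset_closedBall).circleIntegrable zero_le_one
  calc ENNReal.ofReal (2 * π * ‖u a‖ ^ 2) = ENNReal.ofReal (2 * π * ‖g 0‖ ^ 2) := by simp [g]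
    _ ≤ ENNReal.ofReal (2 * π * circleAverage (fun w ↦ ‖g w‖ ^ 2) 0 1) := by
      gcongr
      exact hg'.norm_sq_le_circleAverage
    _ = _ := ofReal_two_pi_mul_circleAverage hint fun _ ↦ by positivity

variable [FiniteDimensional ℂ E] [MeasurableSpace E] [BorelSpace E]
  (μ : Measure E) [μ.IsAddHaarMeasure]

theorem measurePreserving_smul_of_norm_eq_one {w : ℂ} (hw : ‖w‖ = 1) :
    MeasurePreserving (w • · : E → E) μ μ := by
  set L : E →ₗ[ℝ] E := (w • LinearMap.id : E →ₗ[ℂ] E).restrictScalars ℝ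
  have hdet : L.det = 1 := by
    rw [LinearMap.det_restrictScalars, LinearMap.det_smul, LinearMap.det_id, mul_one, map_pow,
      Algebra.norm_complex_apply, Complex.normSq_eq_norm_sq, hw, one_pow, one_pow]
  have h := Measure.map_linearMap_addHaar_eq_smul_addHaar μ (f := L)
    (by rw [hdet]; exact one_ne_zero)
  rw [hdet, inv_one, abs_one, ENNReal.ofReal_one, one_smul] at h
  exact ⟨by fun_prop, h⟩

theorem setLIntegral_ball_comp_rotation (a : E) (r : ℝ) {w : ℂ} (hw : ‖w‖ = 1)
    (f : E → ℝ≥0∞) :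
    ∫⁻ z in ball a r, f (a + w • (z - a)) ∂μ = ∫⁻ z in ball a r, f z ∂μ := by
  have hw₀ : w ≠ 0 := norm_ne_zero_iff.1 (by simp [hw])
  let T : E ≃ᵐ E := (MeasurableEquiv.subRight a).trans
    ((MeasurableEquiv.smul₀ w hw₀).trans (MeasurableEquiv.addLeft a))
  have hT_apply (z : E) : T z = a + w • (z - a) := rfl
  have hT : MeasurePreserving T μ μ := (measurePreserving_add_left μ a).comp
    ((measurePreserving_smul_of_norm_eq_one μ hw).comp (measurePreserving_sub_right μ a))
  have hball : T ⁻¹' ball a r = ball a r := by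
    ext z
    simp [hT_apply, dist_eq_norm, norm_smul, hw]
  simpa only [hball, hT_apply] using
    hT.setLIntegral_comp_preimage_emb T.measurableEmbedding f (ball a r)

theorem measure_ball_mul_norm_sq_le_lintegral (a : E) (r : ℝ) {u : E → ℂ}
    (hu : DifferentiableOn ℂ u (ball a r)) :
    μ (ball a r) * ENNReal.ofReal (‖u a‖ ^ 2) ≤
      ∫⁻ z in ball a r, ENNReal.ofReal (‖u z‖ ^ 2) ∂μ := by
  set F : ℝ → E → ℝ≥0∞ := fun θ z ↦ ENNReal.ofReal (‖u (a + circleMap 0 1 θ • (z - a))‖ ^ 2)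
  have hF : AEMeasurable (Function.uncurry F)
      ((volume.restrict (Set.Ioc 0 (2 * π))).prod (μ.restrict (ball a r))) := by
    have hmaps : Set.MapsTo (fun p : ℝ × E ↦ a + circleMap 0 1 p.1 • (p.2 - a))
        (Set.univ ×ˢ ball a r) (ball a r) := by
      rintro ⟨θ, z⟩ ⟨-, hz⟩
      simpa [dist_eq_norm, norm_smul] using hz
    have hcont : ContinuousOn (Function.uncurry F) (Set.univ ×ˢ ball a r) :=
      ENNReal.continuous_ofReal.comp_continuousOn
        ((hu.continuousOn.comp (by fun_prop) hmaps).norm.pow 2)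
    refine (hcont.aemeasurable (μ := volume.prod μ)
      (MeasurableSet.univ.prod measurableSet_ball)).mono_measure ?_
    rw [Measure.prod_restrict]
    exact Measure.restrict_mono (Set.prod_mono (Set.subset_univ _) le_rfl) le_rfl
  have hrot (θ : ℝ) := setLIntegral_ball_comp_rotation μ a r
    (by simp : ‖circleMap 0 1 θ‖ = 1) fun z ↦ ENNReal.ofReal (‖u z‖ ^ 2)
  refine (ENNReal.mul_le_mul_iff_right (ENNReal.ofReal_pos.2 two_pi_pos).ne'
    ENNReal.ofReal_ne_top).1 ?_
  calc ENNReal.ofReal (2 * π) * (μ (ball a r) * ENNReal.ofReal (‖u a‖ ^ 2))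
      = ∫⁻ _ in ball a r, ENNReal.ofReal (2 * π * ‖u a‖ ^ 2) ∂μ := by
        rw [setLIntegral_const, ENNReal.ofReal_mul two_pi_pos.le]; ring
    _ ≤ ∫⁻ z in ball a r, (∫⁻ θ in Set.Ioc 0 (2 * π), F θ z) ∂μ :=
        setLIntegral_mono' measurableSet_ball fun z hz ↦
          ofReal_two_pi_mul_norm_sq_le_lintegral_circle hu hz
    _ = ∫⁻ θ in Set.Ioc 0 (2 * π), ∫⁻ z in ball a r, F θ z ∂μ :=
        (lintegral_lintegral_swap hF).symm
    _ = ENNReal.ofReal (2 * π) * ∫⁻ z in ball a r, ENNReal.ofReal (‖u z‖ ^ 2) ∂μ := by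
        rw [lintegral_congr hrot, setLIntegral_const, Real.volume_Ioc, sub_zero, mul_comm]

end ComplexSpace

theorem exp_neg_sub_mul_norm_mul_cexp_neg_sq_le {p q K : ℝ} {x b : ℂ}
    (h : q - p - 2 * b.re ≤ K) :
    Real.exp (-p - K) * ‖x * cexp (-b)‖ ^ 2 ≤ ‖x‖ ^ 2 * Real.exp (-q) := by
  have hnorm : ‖x * cexp (-b)‖ ^ 2 = ‖x‖ ^ 2 * Real.exp (-2 * b.re) := by
    rw [norm_mul, mul_pow, norm_exp, neg_re, ← Real.exp_nat_mul]
    ring_nf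
  rw [hnorm, mul_left_comm, ← Real.exp_add]
  gcongr
  linarith

theorem weighted_submean_value_lower_bound_general
    (n : ℕ) (a : EuclideanSpace ℂ (Fin n)) (r : ℝ) (hr : 0 < r)
    (C : ℝ) (hC : 0 ≤ C)
    (φ : EuclideanSpace ℂ (Fin n) → ℝ)
    (β : EuclideanSpace ℂ (Fin n) → ℂ)
    (hβ : DifferentiableOn ℂ β (Metric.ball a r)) (hβa : β a = 0)
    (htaylor : ∀ z ∈ Metric.ball a r,
      |φ z - φ a - 2 * (β z).re| ≤ C * ‖z - a‖ ^ 2)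
    (v : EuclideanSpace ℂ (Fin n) → ℂ)
    (hv : DifferentiableOn ℂ v (Metric.ball a r)) :
    volume (Metric.ball (0 : EuclideanSpace ℂ (Fin n)) 1) *
        ENNReal.ofReal (r ^ (2 * n)) *
        ENNReal.ofReal (‖v a‖ ^ 2 * Real.exp (-φ a - C * r ^ 2))
      ≤ ∫⁻ z in Metric.ball a r,
          ENNReal.ofReal (‖v z‖ ^ 2 * Real.exp (-φ z)) := by
  set u := fun z ↦ v z * cexp (-β z)
  set K := Real.exp (-φ a - C * r ^ 2)
  have hfinrank : Module.finrank ℝ (EuclideanSpace ℂ (Fin n)) = 2 * n := by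
    rw [← Module.finrank_mul_finrank ℝ ℂ, Complex.finrank_real_complex,
      finrank_euclideanSpace_fin]
  have hweight (z : EuclideanSpace ℂ (Fin n)) (hz : z ∈ ball a r) :
      ENNReal.ofReal K * ENNReal.ofReal (‖u z‖ ^ 2) ≤
        ENNReal.ofReal (‖v z‖ ^ 2 * Real.exp (-φ z)) := by
    rw [← ENNReal.ofReal_mul (Real.exp_nonneg _)]
    refine ENNReal.ofReal_le_ofReal (exp_neg_sub_mul_norm_mul_cexp_neg_sq_le
      ((le_of_abs_le (htaylor z hz)).trans ?_))
    gcongr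
    exact (mem_ball_iff_norm.1 hz).le
  calc _ = ENNReal.ofReal K * (volume (ball a r) * ENNReal.ofReal (‖u a‖ ^ 2)) := by
        rw [Measure.addHaar_ball_of_pos _ _ hr, hfinrank, ENNReal.ofReal_mul (by positivity)]
        simp only [u, hβa, neg_zero, Complex.exp_zero, mul_one]
        ring
    _ ≤ ENNReal.ofReal K * ∫⁻ z in ball a r, ENNReal.ofReal (‖u z‖ ^ 2) := by
        gcongr
        exact measure_ball_mul_norm_sq_le_lintegral volume a r (hv.mul hβ.neg.cexp)
    _ = ∫⁻ z in ball a r, ENNReal.ofReal K * ENNReal.ofReal (‖u z‖ ^ 2) :=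
        (lintegral_const_mul' _ _ ENNReal.ofReal_ne_top).symm
    _ ≤ _ := setLIntegral_mono' measurableSet_ball hweight

/-- **Weighted lower bound (estimate (Est3)).**
Let `φ : B(a,r) → ℝ` be continuous and `β` holomorphic on `B(a,r) ⊆ ℂ^n` with
`β(a) = 0` and `|φ(z) − φ(a) − 2 Re β(z)| ≤ C|z−a|²` on `B(a,r)`.  Then for every
holomorphic `v` on `B(a,r)`,
`∫_{B(a,r)} |v|² e^{−φ} dλ ≥ σ_{2n} r^{2n} |v(a)|² e^{−φ(a) − C r²}`,
where `σ_{2n}` is the Lebesgue volume of the unit ball of `ℂ^n` and the left-hand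
side is allowed to be `+∞`. -/
theorem weighted_submean_value_lower_bound
    (n : ℕ) (hn : 1 ≤ n) (a : EuclideanSpace ℂ (Fin n)) (r : ℝ) (hr : 0 < r)
    (C : ℝ) (hC : 0 ≤ C)
    (φ : EuclideanSpace ℂ (Fin n) → ℝ) (hφ : ContinuousOn φ (Metric.ball a r))
    (β : EuclideanSpace ℂ (Fin n) → ℂ)
    (hβ : DifferentiableOn ℂ β (Metric.ball a r)) (hβa : β a = 0)
    (htaylor : ∀ z ∈ Metric.ball a r,
      |φ z - φ a - 2 * (β z).re| ≤ C * ‖z - a‖ ^ 2)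
    (v : EuclideanSpace ℂ (Fin n) → ℂ)
    (hv : DifferentiableOn ℂ v (Metric.ball a r)) :
    volume (Metric.ball (0 : EuclideanSpace ℂ (Fin n)) 1) *
        ENNReal.ofReal (r ^ (2 * n)) *
        ENNReal.ofReal (‖v a‖ ^ 2 * Real.exp (-φ a - C * r ^ 2))
      ≤ ∫⁻ z in Metric.ball a r,
          ENNReal.ofReal (‖v z‖ ^ 2 * Real.exp (-φ z)) :=
  weighted_submean_value_lower_bound_general n a r hr C hC φ β hβ hβa htaylor v hv
end

section
/- Let n ≥ 1 and let g be a holomorphic function on an open subset of ℂ^n containing the closed unit ball. Then there exists a constant C > 0 such that for every r ∈ (0, 1]: | (1/(σ_{2n} r^{2n})) ∫_{{z : |z| < r}} |g(z)|² dλ(z) − |g(0)|² | ≤ C r². -/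
open MeasureTheory
open scoped ENNReal

open Metric

/-!
Along each complex line through the centre, `g` restricts to a holomorphic function of one
variable; Cauchy's estimate for its derivative and the maximum principle for its second divided
difference bound the first-order Taylor remainder of `g` by a multiple of `‖z‖²`. Expanding
`‖g z‖² = ‖g 0 + (g z - g 0)‖²` then gives `‖g z‖² = ‖g 0‖² + ℓ z + O(‖z‖²)` with `ℓ` real-linear.
Since `ℓ` is odd it integrates to zero over balls centred at `0`, so the ball average of `‖g‖²`
differs from `‖g 0‖²` by the average of the `O(‖z‖²)` term, which is `O(r²)`.
-/

theorem Complex.norm_sub_sub_smul_deriv_le {F : Type*} [NormedAddCommGroup F] [NormedSpace ℂ F]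
    [CompleteSpace F] {G : ℂ → F} {c τ : ℂ} {R M : ℝ} (hR : 0 < R)
    (hG : DifferentiableOn ℂ G (closedBall c R)) (hM : ∀ w ∈ closedBall c R, ‖G w‖ ≤ M)
    (hτ : τ ∈ closedBall c R) :
    ‖G τ - G c - (τ - c) • deriv G c‖ ≤ 3 * M / R ^ 2 * ‖τ - c‖ ^ 2 := by
  -- The second divided difference: `G τ = G c + (τ - c) • deriv G c + (τ - c) ^ 2 • H τ`.
  set H := dslope (dslope G c) c
  have hnhds : closedBall c R ∈ nhds c := closedBall_mem_nhds c hR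
  have hH : DiffContOnCl ℂ H (ball c R) := by
    refine DifferentiableOn.diffContOnCl ?_
    rw [closure_ball c hR.ne']
    exact (Complex.differentiableOn_dslope hnhds).2 ((Complex.differentiableOn_dslope hnhds).2 hG)
  have hderiv : ‖deriv G c‖ ≤ M / R :=
    Complex.norm_deriv_le_of_forall_mem_sphere_norm_le hR
      ((hG.mono (closure_ball c hR.ne').le).diffContOnCl)
      fun w hw => hM w (sphere_subset_closedBall hw)
  have hsphere : ∀ w ∈ frontier (ball c R), ‖H w‖ ≤ 3 * M / R ^ 2 := by
    intro w hw
    rw [frontier_ball c hR.ne', mem_sphere_iff_norm] at hw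
    have hne : w ≠ c := by rintro rfl; simp only [sub_self, norm_zero] at hw; linarith
    have hGw : ‖G w - G c‖ ≤ M + M :=
      (norm_sub_le _ _).trans (add_le_add (hM w (by rw [mem_closedBall, dist_eq_norm, hw]))
        (hM c (mem_closedBall_self hR.le)))
    calc ‖H w‖ = R⁻¹ * ‖(w - c)⁻¹ • (G w - G c) - deriv G c‖ := by
          simp [H, dslope_of_ne _ hne, slope_def_module, dslope_same, norm_smul, hw]
      _ ≤ R⁻¹ * (R⁻¹ * (M + M) + M / R) := by
          gcongr
          refine (norm_sub_le _ _).trans (add_le_add ?_ hderiv)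
          rw [norm_smul, norm_inv, hw]
          gcongr
      _ = 3 * M / R ^ 2 := by field_simp; ring
  have hHτ : ‖H τ‖ ≤ 3 * M / R ^ 2 :=
    Complex.norm_le_of_forall_mem_frontier_norm_le isBounded_ball hH hsphere
      (by rwa [closure_ball c hR.ne'])
  have hexpand : G τ - G c - (τ - c) • deriv G c = (τ - c) • (τ - c) • H τ := by
    rw [sub_smul_dslope (dslope G c) c τ, dslope_same, smul_sub, sub_smul_dslope]
  calc ‖G τ - G c - (τ - c) • deriv G c‖ = ‖τ - c‖ ^ 2 * ‖H τ‖ := by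
        rw [hexpand, norm_smul, norm_smul, sq, mul_assoc]
    _ ≤ ‖τ - c‖ ^ 2 * (3 * M / R ^ 2) := by gcongr
    _ = _ := mul_comm _ _

theorem norm_sub_sub_fderiv_le_of_differentiableOn {E F : Type*} [NormedAddCommGroup E]
    [NormedSpace ℂ E] [NormedAddCommGroup F] [NormedSpace ℂ F] [CompleteSpace F] {g : E → F}
    {x z : E} {ρ M : ℝ} (hg : DifferentiableOn ℂ g (closedBall x ρ))
    (hM : ∀ y ∈ closedBall x ρ, ‖g y‖ ≤ M) (hz : z ∈ closedBall x ρ) :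
    ‖g z - g x - fderiv ℂ g x (z - x)‖ ≤ 3 * M / ρ ^ 2 * ‖z - x‖ ^ 2 := by
  rcases eq_or_ne z x with rfl | hzx
  · simp
  set v := z - x
  have hv : 0 < ‖v‖ := norm_pos_iff.2 (sub_ne_zero.2 hzx)
  have hρ : 0 < ρ := hv.trans_le (by rwa [mem_closedBall, dist_eq_norm] at hz)
  set R := ρ / ‖v‖
  have hR : 0 < R := div_pos hρ hv
  have hline : ∀ τ : ℂ, HasDerivAt (fun τ : ℂ => x + τ • v) v τ := fun τ => by
    simpa using ((hasDerivAt_id τ).smul_const v).const_add x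
  have hmaps : Set.MapsTo (fun τ : ℂ => x + τ • v) (closedBall 0 R) (closedBall x ρ) := by
    intro τ hτ
    rw [mem_closedBall_zero_iff] at hτ
    rw [mem_closedBall, dist_eq_norm, add_sub_cancel_left, norm_smul]
    calc ‖τ‖ * ‖v‖ ≤ R * ‖v‖ := by gcongr
      _ = ρ := div_mul_cancel₀ ρ hv.ne'
  have hG : DifferentiableOn ℂ (fun τ : ℂ => g (x + τ • v)) (closedBall 0 R) :=
    hg.comp (fun τ _ => (hline τ).differentiableAt.differentiableWithinAt) hmaps
  have hderiv : deriv (fun τ : ℂ => g (x + τ • v)) 0 = fderiv ℂ g x v := by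
    have hgx : HasFDerivAt g (fderiv ℂ g x) (x + (0 : ℂ) • v) := by
      rw [zero_smul, add_zero]
      exact (hg.differentiableAt (closedBall_mem_nhds x hρ)).hasFDerivAt
    exact (hgx.comp_hasDerivAt 0 (hline 0)).deriv
  have h1 : (1 : ℂ) ∈ closedBall 0 R := by
    rw [mem_closedBall_zero_iff, norm_one, one_le_div hv]
    rwa [mem_closedBall, dist_eq_norm] at hz
  have key := Complex.norm_sub_sub_smul_deriv_le hR hG (fun w hw => hM _ (hmaps hw)) h1
  simp only [one_smul, zero_smul, add_zero, sub_zero, norm_one, one_pow, mul_one, hderiv,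
    v, add_sub_cancel] at key
  calc _ ≤ 3 * M / R ^ 2 := key
    _ = 3 * M / ρ ^ 2 * ‖v‖ ^ 2 := by simp only [R]; field_simp

theorem abs_norm_add_sq_sub_sub_le {𝕜 F : Type*} [RCLike 𝕜] [NormedAddCommGroup F]
    [InnerProductSpace 𝕜 F] (a b d : F) :
    |‖a + b‖ ^ 2 - ‖a‖ ^ 2 - 2 * RCLike.re (inner 𝕜 a d)| ≤ 2 * ‖a‖ * ‖b - d‖ + ‖b‖ ^ 2 := by
  have hexpand : ‖a + b‖ ^ 2 - ‖a‖ ^ 2 - 2 * RCLike.re (inner 𝕜 a d)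
      = 2 * RCLike.re (inner 𝕜 a (b - d)) + ‖b‖ ^ 2 := by
    rw [norm_add_sq (𝕜 := 𝕜), inner_sub_right, map_sub]
    ring
  have hinner : |RCLike.re (inner 𝕜 a (b - d))| ≤ ‖a‖ * ‖b - d‖ :=
    (RCLike.abs_re_le_norm _).trans (norm_inner_le_norm a (b - d))
  rw [hexpand]
  refine (abs_add_le _ _).trans ?_
  rw [abs_mul, abs_two, abs_of_nonneg (sq_nonneg ‖b‖)]
  linarith

theorem exists_abs_norm_sq_sub_sub_le {E F : Type*} [NormedAddCommGroup E] [NormedSpace ℂ E]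
    [NormedAddCommGroup F] [InnerProductSpace ℂ F] [CompleteSpace F] {g : E → F} {x : E}
    {ρ M : ℝ} (hg : DifferentiableOn ℂ g (closedBall x ρ))
    (hM : ∀ y ∈ closedBall x ρ, ‖g y‖ ≤ M) :
    ∃ C, ∀ z ∈ closedBall x ρ,
      |‖g z‖ ^ 2 - ‖g x‖ ^ 2 - 2 * (inner ℂ (g x) (fderiv ℂ g x (z - x))).re| ≤
        C * ‖z - x‖ ^ 2 := by
  set D := fderiv ℂ g x
  set K := 3 * M / ρ ^ 2
  refine ⟨2 * ‖g x‖ * K + (‖D‖ + K * ρ) ^ 2, fun z hz => ?_⟩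
  have hzx : ‖z - x‖ ≤ ρ := by rwa [mem_closedBall, dist_eq_norm] at hz
  have hM0 : 0 ≤ M :=
    (norm_nonneg _).trans (hM x (mem_closedBall_self ((norm_nonneg _).trans hzx)))
  have hK : 0 ≤ K := by positivity
  have hsecond : ‖g z - g x - D (z - x)‖ ≤ K * ‖z - x‖ ^ 2 :=
    norm_sub_sub_fderiv_le_of_differentiableOn hg hM hz
  have hfirst : ‖g z - g x‖ ≤ (‖D‖ + K * ρ) * ‖z - x‖ :=
    calc ‖g z - g x‖ ≤ ‖D (z - x)‖ + ‖g z - g x - D (z - x)‖ := norm_le_insert' _ _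
      _ ≤ ‖D‖ * ‖z - x‖ + K * ‖z - x‖ ^ 2 := add_le_add (D.le_opNorm _) hsecond
      _ ≤ ‖D‖ * ‖z - x‖ + K * (ρ * ‖z - x‖) := by rw [sq]; gcongr
      _ = (‖D‖ + K * ρ) * ‖z - x‖ := by ring
  calc _ ≤ 2 * ‖g x‖ * ‖g z - g x - D (z - x)‖ + ‖g z - g x‖ ^ 2 := by
        simpa only [add_sub_cancel, RCLike.re_to_complex] using
          abs_norm_add_sq_sub_sub_le (𝕜 := ℂ) (g x) (g z - g x) (D (z - x))
    _ ≤ 2 * ‖g x‖ * (K * ‖z - x‖ ^ 2) + ((‖D‖ + K * ρ) * ‖z - x‖) ^ 2 := by gcongr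
    _ = _ := by ring

theorem setIntegral_eq_zero_of_odd {G F : Type*} [MeasurableSpace G] [AddGroup G]
    [MeasurableNeg G] [NormedAddCommGroup F] [NormedSpace ℝ F] {μ : Measure G} [μ.IsNegInvariant]
    {f : G → F} {s : Set G} (hf : ∀ x, f (-x) = -f x) (hs : -s = s) :
    ∫ x in s, f x ∂μ = 0 := by
  have hneg := (Measure.measurePreserving_neg μ).setIntegral_preimage_emb
    (MeasurableEquiv.neg G).measurableEmbedding f s
  rw [Set.neg_preimage, hs] at hneg
  simp only [hf, integral_neg] at hneg
  have htwice : (2 : ℝ) • ∫ x in s, f x ∂μ = 0 := by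
    rw [two_smul]
    nth_rw 1 [← hneg]
    exact neg_add_cancel _
  exact (smul_eq_zero.1 htwice).resolve_left two_ne_zero

theorem abs_setAverage_ball_sub_le_of_odd {E : Type*} [NormedAddCommGroup E] [ProperSpace E]
    [MeasurableSpace E] [BorelSpace E] {μ : Measure E} [μ.IsNegInvariant] [μ.IsOpenPosMeasure]
    [IsFiniteMeasureOnCompacts μ] {f ℓ : E → ℝ} {r C : ℝ} (hr : 0 < r) (hC : 0 ≤ C)
    (hf : IntegrableOn f (ball 0 r) μ) (hℓ : Continuous ℓ) (hodd : ∀ z, ℓ (-z) = -ℓ z)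
    (hbound : ∀ z ∈ ball (0 : E) r, |f z - f 0 - ℓ z| ≤ C * ‖z‖ ^ 2) :
    |⨍ z in ball 0 r, f z ∂μ - f 0| ≤ C * r ^ 2 := by
  set s := ball (0 : E) r
  have hs : 0 < μ.real s := ENNReal.toReal_pos (measure_ball_pos μ 0 hr).ne' measure_ball_lt_top.ne
  have hℓint : IntegrableOn ℓ s μ :=
    hℓ.continuousOn.integrableOn_of_subset_isCompact (isCompact_closedBall 0 r)
      measurableSet_ball ball_subset_closedBall measure_ball_lt_top.ne
  have hconst : IntegrableOn (fun _ => f 0) s μ := integrableOn_const measure_ball_lt_top.ne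
  have hℓzero : ∫ z in s, ℓ z ∂μ = 0 :=
    setIntegral_eq_zero_of_odd hodd (by rw [neg_ball, neg_zero])
  have hremainder : |∫ z in s, (f z - f 0 - ℓ z) ∂μ| ≤ C * r ^ 2 * μ.real s := by
    rw [← Real.norm_eq_abs]
    refine norm_setIntegral_le_of_norm_le_const measure_ball_lt_top fun z hz => ?_
    rw [Real.norm_eq_abs]
    refine (hbound z hz).trans ?_
    have : ‖z‖ < r := mem_ball_zero_iff.1 hz
    gcongr
  have hsplit : ∫ z in s, (f z - f 0 - ℓ z) ∂μ = μ.real s * (⨍ z in s, f z ∂μ - f 0) := by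
    rw [integral_sub (f := fun z => f z - f 0) (hf.sub hconst) hℓint, integral_sub hf hconst,
      hℓzero, setIntegral_const, setAverage_eq, smul_eq_mul, smul_eq_mul]
    field_simp
    ring
  rw [hsplit, abs_mul, abs_of_pos hs] at hremainder
  exact le_of_mul_le_mul_left (by linarith) hs

theorem MeasureTheory.Measure.addHaar_real_ball_of_pos {E : Type*} [NormedAddCommGroup E]
    [NormedSpace ℝ E] [MeasurableSpace E] [BorelSpace E] [FiniteDimensional ℝ E] (μ : Measure E)
    [μ.IsAddHaarMeasure] (x : E) {r : ℝ} (hr : 0 < r) :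
    μ.real (ball x r) = r ^ Module.finrank ℝ E * μ.real (ball 0 1) := by
  rw [measureReal_def, Measure.addHaar_ball_of_pos μ x hr, ENNReal.toReal_mul,
    ENNReal.toReal_ofReal (by positivity), measureReal_def]

theorem finrank_real_euclideanSpace_complex (ι : Type*) [Fintype ι] :
    Module.finrank ℝ (EuclideanSpace ℂ ι) = 2 * Fintype.card ι := by
  rw [← Module.finrank_mul_finrank ℝ ℂ, Complex.finrank_real_complex, finrank_euclideanSpace]

theorem ball_average_sq_norm_second_order_general
    (n : ℕ) (U : Set (EuclideanSpace ℂ (Fin n)))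
    (hUball : Metric.closedBall (0 : EuclideanSpace ℂ (Fin n)) 1 ⊆ U)
    (g : EuclideanSpace ℂ (Fin n) → ℂ)
    (hg : ∀ x ∈ U, DifferentiableAt ℂ g x) :
    ∃ C > (0 : ℝ), ∀ r ∈ Set.Ioc (0 : ℝ) 1,
      |((volume (Metric.ball (0 : EuclideanSpace ℂ (Fin n)) 1)).toReal * r ^ (2 * n))⁻¹ *
            (∫ z in Metric.ball (0 : EuclideanSpace ℂ (Fin n)) r, ‖g z‖ ^ 2) -
          ‖g 0‖ ^ 2|
        ≤ C * r ^ 2 := by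
  have hgd : DifferentiableOn ℂ g (closedBall 0 1) := fun x hx =>
    (hg x (hUball hx)).differentiableWithinAt
  obtain ⟨M, hM⟩ :=
    (isCompact_closedBall (0 : EuclideanSpace ℂ (Fin n)) 1).exists_bound_of_continuousOn
      hgd.continuousOn
  obtain ⟨C, hC⟩ := exists_abs_norm_sq_sub_sub_le hgd hM
  refine ⟨max C 1, by positivity, fun r ⟨hr0, hr1⟩ => ?_⟩
  have hball : ball (0 : EuclideanSpace ℂ (Fin n)) r ⊆ closedBall 0 1 :=
    ball_subset_closedBall.trans (closedBall_subset_closedBall hr1)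
  have hvol : (volume (ball (0 : EuclideanSpace ℂ (Fin n)) 1)).toReal * r ^ (2 * n) =
      volume.real (ball (0 : EuclideanSpace ℂ (Fin n)) r) := by
    rw [Measure.addHaar_real_ball_of_pos volume 0 hr0, finrank_real_euclideanSpace_complex,
      Fintype.card_fin, measureReal_def, mul_comm]
  rw [hvol, ← smul_eq_mul, ← setAverage_eq]
  refine abs_setAverage_ball_sub_le_of_odd (f := fun z => ‖g z‖ ^ 2)
    (ℓ := fun z => 2 * (inner ℂ (g 0) (fderiv ℂ g 0 z)).re) hr0 (by positivity)
    ((hgd.continuousOn.norm.pow 2).integrableOn_of_subset_isCompact (isCompact_closedBall 0 1)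
      measurableSet_ball hball measure_ball_lt_top.ne)
    (by fun_prop) (fun z => by simp only [map_neg, inner_neg_right, Complex.neg_re, mul_neg])
    fun z hz => ?_
  have hquad := hC z (hball hz)
  simp only [sub_zero] at hquad
  exact hquad.trans (by gcongr; exact le_max_left _ _)

/-- **Second-order expansion of ball averages of `|g|²` (estimate (Est4)).**
If `g` is holomorphic on an open subset of `ℂ^n` containing the closed unit ball,
then there is `C > 0` such that for every `r ∈ (0, 1]`,
`| (1/(σ_{2n} r^{2n})) ∫_{|z|<r} |g|² dλ − |g(0)|² | ≤ C r²`, where `σ_{2n}` is the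
Lebesgue volume of the unit ball of `ℂ^n`. -/
theorem ball_average_sq_norm_second_order
    (n : ℕ) (hn : 1 ≤ n) (U : Set (EuclideanSpace ℂ (Fin n))) (hU : IsOpen U)
    (hUball : Metric.closedBall (0 : EuclideanSpace ℂ (Fin n)) 1 ⊆ U)
    (g : EuclideanSpace ℂ (Fin n) → ℂ)
    (hg : ∀ x ∈ U, DifferentiableAt ℂ g x) :
    ∃ C > (0 : ℝ), ∀ r ∈ Set.Ioc (0 : ℝ) 1,
      |((volume (Metric.ball (0 : EuclideanSpace ℂ (Fin n)) 1)).toReal * r ^ (2 * n))⁻¹ *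
            (∫ z in Metric.ball (0 : EuclideanSpace ℂ (Fin n)) r, ‖g z‖ ^ 2) -
          ‖g 0‖ ^ 2|
        ≤ C * r ^ 2 :=
  ball_average_sq_norm_second_order_general n U hUball g hg
end
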